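/- Fix α, β ∈ [0,1] and define γ₁ = 1 − √(β(1−α)) − √(α(1−β)), γ₂ = 1 − √(β(1−α)) + √(α(1−β)), γ₃ = 1 + √(β(1−α)) − √(α(1−β)), γ₄ = 1 + √(β(1−α)) + √(α(1−β)). Then the integral of g(t) = √(−(t−γ₁)(t−γ₂)(t−γ₃)(t−γ₄)) / (π t (2−t) |t−1|) over [γ₁, min(γ₂,γ₃)] ∪ [max(γ₂,γ₃), γ₄] equals 2·min(α, β, 1−α, 1−β). -/

import Mathlib

/-!
Write `a = √(β(1-α))`, `b = √(α(1-β))`, `A = (a+b)²`, `B = (a-b)²`. The quartic under the root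
is `(A - (t-1)²)((t-1)² - B)` and `t(2-t) = 1 - (t-1)²`, so the density is a function of
`s = (t-1)²` times `|t-1|⁻¹`; each of the two intervals is mapped onto `[B, A]` by `s`, and the
mass becomes `(1/π) ∫_B^A √((A-s)(s-B)) / (s(1-s)) ds`. Splitting `1/(s(1-s)) = 1/s + 1/(1-s)`
and using `∫_B^A √((A-s)(s-B)) / s ds = π((A+B)/2 - √(AB))` (and its reflection `s ↦ 1-s`)
gives `1 - √(AB) - √((1-A)(1-B)) = 1 - |α-β| - |1-α-β| = 2 min(α, β, 1-α, 1-β)`.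
-/

open Real

noncomputable def γ₁ (α β : ℝ) : ℝ := 1 - Real.sqrt (β * (1 - α)) - Real.sqrt (α * (1 - β))
noncomputable def γ₂ (α β : ℝ) : ℝ := 1 - Real.sqrt (β * (1 - α)) + Real.sqrt (α * (1 - β))
noncomputable def γ₃ (α β : ℝ) : ℝ := 1 + Real.sqrt (β * (1 - α)) - Real.sqrt (α * (1 - β))
noncomputable def γ₄ (α β : ℝ) : ℝ := 1 + Real.sqrt (β * (1 - α)) + Real.sqrt (α * (1 - β))

/-- The density of the absolutely continuous part of `B(α) ⊞ B(β)`. -/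
noncomputable def bernoulliBoxplusDensity (α β : ℝ) (t : ℝ) : ℝ :=
  Real.sqrt (-((t - γ₁ α β) * (t - γ₂ α β) * (t - γ₃ α β) * (t - γ₄ α β))) /
    (π * t * (2 - t) * |t - 1|)

open MeasureTheory Set intervalIntegral

section SqrtQuadraticIntegral

variable {A B x : ℝ}

lemma hasDerivAt_sqrt_sub_mul_sub (hx : x ∈ Ioo B A) :
    HasDerivAt (fun s => √((A - s) * (s - B)))
      ((A + B - 2 * x) / (2 * √((A - x) * (x - B)))) x := by
  have hpos : 0 < (A - x) * (x - B) := mul_pos (by linarith [hx.2]) (by linarith [hx.1])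
  have hq : HasDerivAt (fun s => (A - s) * (s - B)) (A + B - 2 * x) x :=
    (((hasDerivAt_id x).const_sub A).mul ((hasDerivAt_id x).sub_const B)).congr_deriv
      (by simp; ring)
  exact hq.sqrt hpos.ne'

lemma hasDerivAt_arcsin_two_mul_sub_div (hx : x ∈ Ioo B A) :
    HasDerivAt (fun s => arcsin ((2 * s - (A + B)) / (A - B)))
      (1 / √((A - x) * (x - B))) x := by
  have hAB : 0 < A - B := by linarith [hx.1, hx.2]
  have hr : 0 < √((A - x) * (x - B)) :=
    sqrt_pos.mpr (mul_pos (by linarith [hx.2]) (by linarith [hx.1]))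
  have hlt : (2 * x - (A + B)) / (A - B) < 1 := (div_lt_one hAB).mpr (by linarith [hx.2])
  have hgt : -1 < (2 * x - (A + B)) / (A - B) := by
    rw [lt_div_iff₀ hAB]; linarith [hx.1]
  have hL : HasDerivAt (fun s : ℝ => (2 * s - (A + B)) / (A - B)) (2 / (A - B)) x :=
    ((((hasDerivAt_id x).const_mul 2).sub_const (A + B)).div_const (A - B)).congr_deriv
      (by simp)
  have hsqrt : √(1 - ((2 * x - (A + B)) / (A - B)) ^ 2) =
      2 / (A - B) * √((A - x) * (x - B)) := by
    rw [show 1 - ((2 * x - (A + B)) / (A - B)) ^ 2 = (2 / (A - B)) ^ 2 * ((A - x) * (x - B)) by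
      field_simp; ring, sqrt_mul (sq_nonneg _), sqrt_sq (div_pos two_pos hAB).le]
  refine ((hasDerivAt_arcsin hgt.ne' hlt.ne).comp x hL).congr_deriv ?_
  rw [hsqrt]
  field_simp

lemma hasDerivAt_sqrt_mul_mul_arcsin (hB : 0 ≤ B) (hx : x ∈ Ioo B A) :
    HasDerivAt (fun s => √(A * B) * arcsin (((A + B) * s - 2 * (A * B)) / ((A - B) * s)))
      (A * B / (x * √((A - x) * (x - B)))) x := by
  rcases hB.eq_or_lt with rfl | hB
  · simpa using hasDerivAt_const x (0 : ℝ)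
  have hx0 : 0 < x := hB.trans hx.1
  have hAB : 0 < A - B := by linarith [hx.1, hx.2]
  have hr : 0 < √((A - x) * (x - B)) :=
    sqrt_pos.mpr (mul_pos (by linarith [hx.2]) (by linarith [hx.1]))
  have hAB0 : 0 < A * B := mul_pos (hx0.trans hx.2) hB
  have hq : 0 < √(A * B) := sqrt_pos.mpr hAB0
  have hden : 0 < (A - B) * x := mul_pos hAB hx0
  have hM : HasDerivAt (fun s : ℝ => ((A + B) * s - 2 * (A * B)) / ((A - B) * s))
      (2 * (A * B) / ((A - B) * x ^ 2)) x := by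
    refine ((((hasDerivAt_id x).const_mul (A + B)).sub_const (2 * (A * B))).div
      ((hasDerivAt_id x).const_mul (A - B)) hden.ne').congr_deriv ?_
    simp only [id]
    field_simp
    ring
  have hid : 1 - (((A + B) * x - 2 * (A * B)) / ((A - B) * x)) ^ 2
      = (2 / ((A - B) * x)) ^ 2 * (√(A * B) * √((A - x) * (x - B))) ^ 2 := by
    rw [mul_pow, sq_sqrt hAB0.le, sq_sqrt (by nlinarith [hx.1, hx.2])]
    field_simp; ring
  have hsq : (((A + B) * x - 2 * (A * B)) / ((A - B) * x)) ^ 2 < 1 := by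
    have : 0 < 1 - (((A + B) * x - 2 * (A * B)) / ((A - B) * x)) ^ 2 := by
      rw [hid]; have := div_pos two_pos hden; positivity
    linarith
  obtain ⟨hgt, hlt⟩ := abs_lt.mp ((sq_lt_one_iff_abs_lt_one _).mp hsq)
  refine (((hasDerivAt_arcsin hgt.ne' hlt.ne).comp x hM).const_mul (√(A * B))).congr_deriv ?_
  rw [hid, ← mul_pow, sqrt_sq (by have := div_pos two_pos hden; positivity)]
  field_simp

lemma continuousOn_sqrt_mul_mul_arcsin (hB : 0 ≤ B) (hBA : B < A) :
    ContinuousOn (fun s => √(A * B) * arcsin (((A + B) * s - 2 * (A * B)) / ((A - B) * s)))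
      (Icc B A) := by
  rcases hB.eq_or_lt with rfl | hB
  · simpa using continuousOn_const
  refine continuousOn_const.mul (continuous_arcsin.comp_continuousOn (ContinuousOn.div
    (by fun_prop) (by fun_prop) fun s hs => ?_))
  exact (mul_pos (sub_pos.mpr hBA) (hB.trans_le hs.1)).ne'

lemma intervalIntegrable_sqrt_sub_mul_sub_div_self (hB : 0 ≤ B) (hBA : B ≤ A) :
    IntervalIntegrable (fun s => √((A - s) * (s - B)) / s) volume B A := by
  refine IntervalIntegrable.mono_fun' (g := fun s => √A * s ^ (-(1 / 2) : ℝ))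
    ((intervalIntegrable_rpow' (by norm_num)).const_mul _)
    (by fun_prop : Measurable fun s => √((A - s) * (s - B)) / s).aestronglyMeasurable ?_
  rw [uIoc_of_le hBA]
  filter_upwards [ae_restrict_mem measurableSet_Ioc] with s hs
  have hs0 : 0 < s := hB.trans_lt hs.1
  rw [norm_of_nonneg (by positivity)]
  calc √((A - s) * (s - B)) / s ≤ √(A * s) / s := by
        gcongr √?_ / _
        exact mul_le_mul (by linarith : A - s ≤ A) (by linarith : s - B ≤ s) (by linarith [hs.1])
          (hB.trans hBA)
    _ = √A * s ^ (-(1 / 2) : ℝ) := by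
        rw [sqrt_mul (hB.trans hBA), mul_div_assoc, sqrt_div_self', rpow_neg hs0.le,
          ← sqrt_eq_rpow, one_div]

theorem integral_sqrt_sub_mul_sub_div_self (hB : 0 ≤ B) (hBA : B ≤ A) :
    ∫ s in B..A, √((A - s) * (s - B)) / s = π * ((A + B) / 2 - √(A * B)) := by
  rcases hBA.eq_or_lt with rfl | hBA
  · rw [integral_same, ← sq, sqrt_sq hB]; ring
  set F : ℝ → ℝ := fun s => √((A - s) * (s - B))
    + (A + B) / 2 * arcsin ((2 * s - (A + B)) / (A - B))
    - √(A * B) * arcsin (((A + B) * s - 2 * (A * B)) / ((A - B) * s))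
  have hAB : A - B ≠ 0 := (sub_pos.mpr hBA).ne'
  have hderiv : ∀ x ∈ Ioo B A, HasDerivAt F (√((A - x) * (x - B)) / x) x := by
    intro x hx
    refine (((hasDerivAt_sqrt_sub_mul_sub hx).add ((hasDerivAt_arcsin_two_mul_sub_div
      hx).const_mul ((A + B) / 2))).sub (hasDerivAt_sqrt_mul_mul_arcsin hB hx)).congr_deriv ?_
    have hx0 : 0 < x := hB.trans_lt hx.1
    have hpos : 0 < (A - x) * (x - B) := mul_pos (by linarith [hx.2]) (by linarith [hx.1])
    have hr := sqrt_pos.mpr hpos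
    field_simp
    linear_combination (-2) * sq_sqrt hpos.le
  have hcont : ContinuousOn F (Icc B A) :=
    ((by fun_prop : Continuous fun s => √((A - s) * (s - B)) + (A + B) / 2 *
      arcsin ((2 * s - (A + B)) / (A - B))).continuousOn).sub
      (continuousOn_sqrt_mul_mul_arcsin hB hBA)
  -- at `B = 0` the argument is the junk value `0 / 0`, but its coefficient `√(A * B)` vanishes
  have hFB : √(A * B) * arcsin (((A + B) * B - 2 * (A * B)) / ((A - B) * B)) =
      √(A * B) * (-(π / 2)) := by
    rcases hB.eq_or_lt with rfl | hB
    · simp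
    rw [show (A + B) * B - 2 * (A * B) = -((A - B) * B) by ring, neg_div,
      div_self (mul_pos (sub_pos.mpr hBA) hB).ne', arcsin_neg_one]
  rw [integral_eq_sub_of_hasDerivAt_of_le hBA.le hcont hderiv
    (intervalIntegrable_sqrt_sub_mul_sub_div_self hB hBA.le)]
  simp only [F, hFB, sub_self, zero_mul, mul_zero, sqrt_zero, zero_add]
  rw [show 2 * A - (A + B) = A - B by ring, show 2 * B - (A + B) = -(A - B) by ring,
    show (A + B) * A - 2 * (A * B) = (A - B) * A by ring, neg_div, div_self hAB,
    div_self (mul_pos (sub_pos.mpr hBA) (hB.trans_lt hBA)).ne', arcsin_one, arcsin_neg_one]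
  ring

private lemma sub_sub_mul_sub_sub (s : ℝ) :
    (1 - B - (1 - s)) * (1 - s - (1 - A)) = (A - s) * (s - B) := by ring

lemma intervalIntegrable_sqrt_sub_mul_sub_div_one_sub (hBA : B ≤ A) (hA : A ≤ 1) :
    IntervalIntegrable (fun s => √((A - s) * (s - B)) / (1 - s)) volume B A := by
  have h := intervalIntegrable_sqrt_sub_mul_sub_div_self (A := 1 - B) (B := 1 - A)
    (by linarith) (by linarith)
  have h' := (h.comp_sub_left 1).symm
  simp only [sub_sub_cancel, sub_sub_mul_sub_sub] at h'
  exact h'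

theorem integral_sqrt_sub_mul_sub_div_one_sub (hBA : B ≤ A) (hA : A ≤ 1) :
    ∫ s in B..A, √((A - s) * (s - B)) / (1 - s)
      = π * ((2 - A - B) / 2 - √((1 - A) * (1 - B))) := by
  have h := integral_sqrt_sub_mul_sub_div_self (A := 1 - B) (B := 1 - A)
    (by linarith) (by linarith)
  rw [← integral_comp_sub_left] at h
  simp only [sub_sub_mul_sub_sub] at h
  rw [h, mul_comm (1 - B)]
  ring

lemma eqOn_sqrt_sub_mul_sub_div_mul_one_sub (hB : 0 ≤ B) (hBA : B ≤ A) (hA : A ≤ 1) :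
    EqOn (fun s => √((A - s) * (s - B)) / (s * (1 - s)))
      (fun s => √((A - s) * (s - B)) / s + √((A - s) * (s - B)) / (1 - s)) (uIoo B A) := by
  rw [uIoo_of_le hBA]
  intro s hs
  have hs0 : s ≠ 0 := (hB.trans_lt hs.1).ne'
  have hs1 : 1 - s ≠ 0 := (sub_pos.mpr (hs.2.trans_le hA)).ne'
  field_simp
  ring

lemma intervalIntegrable_sqrt_sub_mul_sub_div_mul_one_sub (hB : 0 ≤ B) (hBA : B ≤ A)
    (hA : A ≤ 1) :
    IntervalIntegrable (fun s => √((A - s) * (s - B)) / (s * (1 - s))) volume B A :=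
  ((intervalIntegrable_sqrt_sub_mul_sub_div_self hB hBA).add
    (intervalIntegrable_sqrt_sub_mul_sub_div_one_sub hBA hA)).congr_uIoo
    (eqOn_sqrt_sub_mul_sub_div_mul_one_sub hB hBA hA).symm

theorem integral_sqrt_sub_mul_sub_div_mul_one_sub (hB : 0 ≤ B) (hBA : B ≤ A) (hA : A ≤ 1) :
    ∫ s in B..A, √((A - s) * (s - B)) / (s * (1 - s))
      = π * (1 - √(A * B) - √((1 - A) * (1 - B))) := by
  rw [integral_congr_uIoo (eqOn_sqrt_sub_mul_sub_div_mul_one_sub hB hBA hA),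
    integral_add (intervalIntegrable_sqrt_sub_mul_sub_div_self hB hBA)
      (intervalIntegrable_sqrt_sub_mul_sub_div_one_sub hBA hA),
    integral_sqrt_sub_mul_sub_div_self hB hBA, integral_sqrt_sub_mul_sub_div_one_sub hBA hA]
  ring

end SqrtQuadraticIntegral

section SquareSubstitution

variable {c d : ℝ} {g : ℝ → ℝ}

lemma monotoneOn_sq_Icc (hc : 0 ≤ c) : MonotoneOn (fun u : ℝ => u ^ 2) (Icc c d) :=
  fun _ hx _ _ hxy => pow_le_pow_left₀ (hc.trans hx.1) hxy 2

lemma image_sq_Icc (hc : 0 ≤ c) (hcd : c ≤ d) :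
    (fun u : ℝ => u ^ 2) '' Icc c d = Icc (c ^ 2) (d ^ 2) :=
  (continuous_pow 2).continuousOn.image_Icc_of_monotoneOn hcd (monotoneOn_sq_Icc hc)

lemma intervalIntegrable_two_mul_mul_comp_sq (hc : 0 ≤ c) (hcd : c ≤ d)
    (hg : IntegrableOn g (Icc (c ^ 2) (d ^ 2))) :
    IntervalIntegrable (fun u => 2 * u * g (u ^ 2)) volume c d := by
  rw [← image_sq_Icc hc hcd, integrableOn_image_iff_integrableOn_deriv_smul_of_monotoneOn
    measurableSet_Icc (fun u _ => (hasDerivAt_pow 2 u).hasDerivWithinAt) (monotoneOn_sq_Icc hc)]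
    at hg
  rw [intervalIntegrable_iff_integrableOn_Icc_of_le hcd]
  simpa [mul_comm] using hg

theorem integral_two_mul_mul_comp_sq (hc : 0 ≤ c) (hcd : c ≤ d) :
    ∫ u in c..d, 2 * u * g (u ^ 2) = ∫ s in c ^ 2..d ^ 2, g s := by
  have h := integral_image_eq_integral_deriv_smul_of_monotoneOn measurableSet_Icc
    (fun u _ => (hasDerivAt_pow 2 u).hasDerivWithinAt) (monotoneOn_sq_Icc (d := d) hc) g
  rw [image_sq_Icc hc hcd] at h
  rw [integral_of_le hcd, integral_of_le (pow_le_pow_left₀ hc hcd 2),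
    ← integral_Icc_eq_integral_Ioc, ← integral_Icc_eq_integral_Ioc, h]
  simp [mul_comm]

theorem integral_union_Icc_abs_mul_comp_sq (x₀ : ℝ) (hc : 0 ≤ c) (hcd : c ≤ d)
    (hg : IntegrableOn g (Icc (c ^ 2) (d ^ 2))) :
    ∫ t in Icc (x₀ - d) (x₀ - c) ∪ Icc (x₀ + c) (x₀ + d), |2 * (t - x₀)| * g ((t - x₀) ^ 2)
      = 2 * ∫ s in c ^ 2..d ^ 2, g s := by
  set F : ℝ → ℝ := fun t => |2 * (t - x₀)| * g ((t - x₀) ^ 2)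
  have hF_refl : ∀ u, F (x₀ - u) = F (x₀ + u) := fun u => by simp [F, abs_neg]
  have hF_sq : EqOn (fun u => F (x₀ + u)) (fun u => 2 * u * g (u ^ 2)) (uIcc c d) := by
    intro u hu
    rw [uIcc_of_le hcd] at hu
    simp [F, abs_of_nonneg (hc.trans hu.1)]
  have hint := (intervalIntegrable_two_mul_mul_comp_sq hc hcd hg).congr
    (hF_sq.symm.mono uIoc_subset_uIcc)
  have hright : IntervalIntegrable F volume (x₀ + c) (x₀ + d) := by
    simpa [add_comm] using hint.comp_add_left (-x₀)
  have hleft : IntervalIntegrable F volume (x₀ - d) (x₀ - c) := by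
    have hint' : IntervalIntegrable (fun u => F (x₀ - u)) volume c d := by
      simpa only [hF_refl] using hint
    simpa using (hint'.comp_sub_left x₀).symm
  have hright_eq : ∫ t in (x₀ + c)..(x₀ + d), F t = ∫ s in c ^ 2..d ^ 2, g s := by
    rw [← integral_comp_add_left, integral_congr hF_sq, integral_two_mul_mul_comp_sq hc hcd]
  have hleft_eq : ∫ t in (x₀ - d)..(x₀ - c), F t = ∫ s in c ^ 2..d ^ 2, g s := by
    rw [← integral_comp_sub_left, ← hright_eq, ← integral_comp_add_left]
    simp only [hF_refl]
  have hdisj : AEDisjoint volume (Icc (x₀ - d) (x₀ - c)) (Icc (x₀ + c) (x₀ + d)) :=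
    measure_mono_null (fun t ht => (by linarith [ht.1.2, ht.2.1] : t = x₀))
      (measure_singleton x₀)
  rw [setIntegral_union₀ hdisj measurableSet_Icc.nullMeasurableSet
      ((intervalIntegrable_iff_integrableOn_Icc_of_le (by linarith)).mp hleft)
      ((intervalIntegrable_iff_integrableOn_Icc_of_le (by linarith)).mp hright),
    integral_Icc_eq_integral_Ioc, integral_Icc_eq_integral_Ioc, ← integral_of_le (by linarith),
    ← integral_of_le (by linarith), hleft_eq, hright_eq, two_mul]

end SquareSubstitution

lemma sqrt_neg_quartic_div_eq (a b t : ℝ) :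
    √(-((t - (1 - a - b)) * (t - (1 - a + b)) * (t - (1 + a - b)) * (t - (1 + a + b)))) /
        (π * t * (2 - t) * |t - 1|)
      = |2 * (t - 1)| * (√(((a + b) ^ 2 - (t - 1) ^ 2) * ((t - 1) ^ 2 - (a - b) ^ 2)) /
        ((t - 1) ^ 2 * (1 - (t - 1) ^ 2)) / (2 * π)) := by
  rw [show -((t - (1 - a - b)) * (t - (1 - a + b)) * (t - (1 + a - b)) * (t - (1 + a + b)))
      = ((a + b) ^ 2 - (t - 1) ^ 2) * ((t - 1) ^ 2 - (a - b) ^ 2) by ring,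
    show π * t * (2 - t) * |t - 1| = π * (1 - (t - 1) ^ 2) * |t - 1| by ring]
  generalize t - 1 = u
  rcases eq_or_ne u 0 with rfl | hu
  · simp
  rcases eq_or_ne (1 - u ^ 2) 0 with h | h
  · simp [h]
  rw [abs_mul, abs_two, ← sq_abs u]
  have := abs_pos.mpr hu
  field_simp

lemma min_one_sub_add_one_add_sub (a b : ℝ) : min (1 - a + b) (1 + a - b) = 1 - |a - b| := by
  rw [abs_eq_max_neg, ← min_sub_sub_left]; congr 1 <;> ring

lemma max_one_sub_add_one_add_sub (a b : ℝ) : max (1 - a + b) (1 + a - b) = 1 + |a - b| := by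
  rw [abs_eq_max_neg, ← max_add_add_left, max_comm]; congr 1 <;> ring

theorem integral_sqrt_neg_quartic_div {a b : ℝ} (ha : 0 ≤ a) (hb : 0 ≤ b) (hab : a + b ≤ 1) :
    ∫ t in Icc (1 - a - b) (min (1 - a + b) (1 + a - b)) ∪
        Icc (max (1 - a + b) (1 + a - b)) (1 + a + b),
      √(-((t - (1 - a - b)) * (t - (1 - a + b)) * (t - (1 + a - b)) * (t - (1 + a + b)))) /
        (π * t * (2 - t) * |t - 1|)
      = 1 - √((a + b) ^ 2 * (a - b) ^ 2) - √((1 - (a + b) ^ 2) * (1 - (a - b) ^ 2)) := by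
  have hc : |a - b| ≤ a + b := abs_sub_le_iff.mpr ⟨by linarith, by linarith⟩
  have hBA : (a - b) ^ 2 ≤ (a + b) ^ 2 := by nlinarith
  have hA : (a + b) ^ 2 ≤ 1 := by nlinarith
  have hg : IntegrableOn (fun s => √(((a + b) ^ 2 - s) * (s - (a - b) ^ 2)) / (s * (1 - s)) /
      (2 * π)) (Icc (|a - b| ^ 2) ((a + b) ^ 2)) := by
    rw [sq_abs, ← intervalIntegrable_iff_integrableOn_Icc_of_le hBA]
    exact (intervalIntegrable_sqrt_sub_mul_sub_div_mul_one_sub (sq_nonneg _) hBA hA).div_const _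
  simp only [sqrt_neg_quartic_div_eq]
  simp only [min_one_sub_add_one_add_sub, max_one_sub_add_one_add_sub, sub_sub 1 a b,
    add_assoc 1 a b]
  rw [integral_union_Icc_abs_mul_comp_sq 1 (abs_nonneg _) hc hg, sq_abs,
    intervalIntegral.integral_div, integral_sqrt_sub_mul_sub_div_mul_one_sub (sq_nonneg _) hBA hA]
  field_simp

theorem one_sub_abs_sub_abs_eq_two_mul_min (α β : ℝ) :
    1 - |β - α| - |1 - α - β| = 2 * min (min α β) (min (1 - α) (1 - β)) := by
  simp only [min_def, abs_eq_max_neg, max_def]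
  split_ifs <;> linarith

/-- the total mass of the absolutely continuous part of `B(α) ⊞ B(β)`:
the integral of `g(t) = √(-(t-γ₁)(t-γ₂)(t-γ₃)(t-γ₄)) / (π t (2-t)|t-1|)` over
`[γ₁, min(γ₂,γ₃)] ∪ [max(γ₂,γ₃), γ₄]` equals `2·min(α, β, 1-α, 1-β)`. -/
theorem total_mass_bernoulli_boxplus_density
    (α β : ℝ) (hα : α ∈ Set.Icc (0:ℝ) 1) (hβ : β ∈ Set.Icc (0:ℝ) 1) :
    (∫ t in Set.Icc (γ₁ α β) (min (γ₂ α β) (γ₃ α β)) ∪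
        Set.Icc (max (γ₂ α β) (γ₃ α β)) (γ₄ α β),
      bernoulliBoxplusDensity α β t) =
      2 * min (min α β) (min (1 - α) (1 - β)) := by
  obtain ⟨hα0, hα1⟩ := hα
  obtain ⟨hβ0, hβ1⟩ := hβ
  set a := √(β * (1 - α))
  set b := √(α * (1 - β))
  have ha2 : a ^ 2 = β * (1 - α) := sq_sqrt (by nlinarith)
  have hb2 : b ^ 2 = α * (1 - β) := sq_sqrt (by nlinarith)
  have hab : a + b ≤ 1 := by
    have ha : a ≤ (β + (1 - α)) / 2 :=
      sqrt_le_iff.mpr ⟨by linarith, by nlinarith [sq_nonneg (β - (1 - α))]⟩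
    have hb : b ≤ (α + (1 - β)) / 2 :=
      sqrt_le_iff.mpr ⟨by linarith, by nlinarith [sq_nonneg (α - (1 - β))]⟩
    linarith
  have hsqrt_AB : √((a + b) ^ 2 * (a - b) ^ 2) = |β - α| := by
    rw [← mul_pow, sqrt_sq_eq_abs]
    congr 1
    linear_combination ha2 - hb2
  have hsqrt_one_sub : √((1 - (a + b) ^ 2) * (1 - (a - b) ^ 2)) = |1 - α - β| := by
    rw [← sqrt_sq_eq_abs]
    congr 1
    rw [show (1 - (a + b) ^ 2) * (1 - (a - b) ^ 2) = (1 - a ^ 2 - b ^ 2) ^ 2 - 4 * a ^ 2 * b ^ 2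
      by ring, ha2, hb2]
    ring
  rw [← one_sub_abs_sub_abs_eq_two_mul_min, ← hsqrt_AB, ← hsqrt_one_sub]
  exact integral_sqrt_neg_quartic_div (sqrt_nonneg _) (sqrt_nonneg _) hab
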